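/- Let N be an internally labelled phylogenetic network and let v be a reticulation node of N. A node u is a strong ancestor of v if and only if one of the following two conditions holds: p(v) divides p(u), in which case u is a reticulation node; or p(v) divides p(u) − y, in which case u is a tree node. -/

import Mathlib

/-- The data of a rooted binary internally multi-labelled phylogenetic network (IMLN):
a finite directed graph (no parallel arcs, since `Arc` is a relation) with a
distinguished root, leaf labels in `X` and reticulation/elementary labels in `Λ`. -/
structure IMLN (X : Type) (Λ : Type) : Type 1 where
  V : Type
  fintypeV : Fintype V
  Arc : V → V → Prop
  root : V
  leafLabel : V → X
  retLabel : V → Λ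

namespace IMLN

variable {X Λ : Type}

/-- In-degree of a node. -/
noncomputable def inDeg (N : IMLN X Λ) (v : N.V) : ℕ := {u : N.V | N.Arc u v}.ncard

/-- Out-degree of a node. -/
noncomputable def outDeg (N : IMLN X Λ) (v : N.V) : ℕ := {w : N.V | N.Arc v w}.ncard

/-- A leaf: a node of out-degree zero. -/
def IsLeaf (N : IMLN X Λ) (v : N.V) : Prop := N.outDeg v = 0

/-- A reticulation node: in-degree two and out-degree one. -/
def IsRet (N : IMLN X Λ) (v : N.V) : Prop := N.inDeg v = 2 ∧ N.outDeg v = 1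

/-- An elementary node: in-degree at most one and out-degree one. -/
def IsElem (N : IMLN X Λ) (v : N.V) : Prop := N.inDeg v ≤ 1 ∧ N.outDeg v = 1

/-- A tree node: a leaf, or a node of out-degree two (in particular not of out-degree one). -/
def IsTreeNode (N : IMLN X Λ) (v : N.V) : Prop := N.outDeg v ≠ 1

/-- An internal node: a non-leaf. -/
def IsInternal (N : IMLN X Λ) (v : N.V) : Prop := ¬ N.IsLeaf v

/-- Reachability by a (possibly trivial) directed path. -/
def Reaches (N : IMLN X Λ) (u v : N.V) : Prop := Relation.ReflTransGen N.Arc u v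

/-- Well-formedness: `N` is a rooted binary internally multi-labelled phylogenetic network. -/
structure IsIMLN (N : IMLN X Λ) : Prop where
  acyclic : ∀ v : N.V, ¬ Relation.TransGen N.Arc v v
  rootIn : N.inDeg N.root = 0
  rootOut : N.outDeg N.root = 1 ∨ N.outDeg N.root = 2
  uniqueRoot : ∀ v : N.V, N.inDeg v = 0 → v = N.root
  connected : ∀ v : N.V, N.Reaches N.root v
  degrees : ∀ v : N.V, v ≠ N.root →
      (N.inDeg v = 1 ∧ (N.outDeg v = 0 ∨ N.outDeg v = 1 ∨ N.outDeg v = 2)) ∨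
      (N.inDeg v = 2 ∧ N.outDeg v = 1)
  leafSurj : ∀ x : X, ∃ v : N.V, N.IsLeaf v ∧ N.leafLabel v = x
  retInj : ∀ u v : N.V, N.IsRet u → N.IsRet v → N.retLabel u = N.retLabel v → u = v
  retElemLabels : ∀ u v : N.V, N.IsRet u → N.IsElem v → N.retLabel u ≠ N.retLabel v

/-- An internally labelled phylogenetic network: an IMLN with no elementary nodes
whose leaf labelling and reticulation labelling are bijections. -/
def IsILPN (N : IMLN X Λ) : Prop :=
  N.IsIMLN ∧ (∀ v : N.V, ¬ N.IsElem v) ∧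
    (∀ x : X, ∃! v : N.V, N.IsLeaf v ∧ N.leafLabel v = x) ∧
    (∀ l : Λ, ∃! v : N.V, N.IsRet v ∧ N.retLabel v = l)

/-- `u ∈ R_min(N)`: a reticulation node with no reticulation node strictly below it. -/
def IsMinRet (N : IMLN X Λ) (u : N.V) : Prop :=
  N.IsRet u ∧ ∀ w : N.V, N.IsRet w → N.Reaches u w → w = u

/-- The sub-IMLN `N(u)` rooted at `u`. -/
noncomputable def sub (N : IMLN X Λ) (u : N.V) : IMLN X Λ where
  V := {v : N.V // N.Reaches u v}
  fintypeV := @Subtype.fintype _ _ (Classical.decPred _) N.fintypeV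
  Arc a b := N.Arc a.1 b.1
  root := ⟨u, Relation.ReflTransGen.refl⟩
  leafLabel a := N.leafLabel a.1
  retLabel a := N.retLabel a.1

/-- Isomorphism of IMLNs up to a permutation of the leaf labels and of the
internal labels: an arc-preserving bijection relating the labels via `σX`, `σΛ`. -/
def IsomUpTo (σX : Equiv.Perm X) (σΛ : Equiv.Perm Λ) (N₁ N₂ : IMLN X Λ) : Prop :=
  ∃ f : N₁.V ≃ N₂.V,
    (∀ u v : N₁.V, N₁.Arc u v ↔ N₂.Arc (f u) (f v)) ∧
    (∀ v : N₁.V, N₁.IsLeaf v → N₁.leafLabel v = σX (N₂.leafLabel (f v))) ∧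
    (∀ v : N₁.V, N₁.IsRet v ∨ N₁.IsElem v → N₁.retLabel v = σΛ (N₂.retLabel (f v)))

/-- Isomorphism of IMLNs: an arc-preserving bijection preserving leaf labels and
the labels of reticulation and elementary nodes. -/
def Isom (N₁ N₂ : IMLN X Λ) : Prop := IsomUpTo (Equiv.refl X) (Equiv.refl Λ) N₁ N₂

/-- `N'` is the unfolded IMLN `U(N,u)` of `N` at `u`: the arcs from the two parents
`v₁, v₂` of `u` to `u` are deleted, the subnetwork rooted at `u` is duplicated with
all its labels (`g` embeds `N` itself, `g'` embeds the new copy of the subnetwork),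
and arcs from `v₁` to one copy of `u` and from `v₂` to the other copy are added. -/
def IsUnfoldAt (N N' : IMLN X Λ) (u : N.V) : Prop :=
  ∃ g g' : N.V → N'.V,
    Function.Injective g ∧
    (∀ a b : N.V, N.Reaches u a → N.Reaches u b → g' a = g' b → a = b) ∧
    (∀ a b : N.V, N.Reaches u b → g a ≠ g' b) ∧
    (∀ x : N'.V, (∃ a, x = g a) ∨ (∃ a, N.Reaches u a ∧ x = g' a)) ∧
    g N.root = N'.root ∧
    (∀ a : N.V, N'.leafLabel (g a) = N.leafLabel a) ∧
    (∀ a : N.V, N'.retLabel (g a) = N.retLabel a) ∧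
    (∀ a : N.V, N.Reaches u a → N'.leafLabel (g' a) = N.leafLabel a) ∧
    (∀ a : N.V, N.Reaches u a → N'.retLabel (g' a) = N.retLabel a) ∧
    ∃ v₁ v₂ : N.V, v₁ ≠ v₂ ∧ N.Arc v₁ u ∧ N.Arc v₂ u ∧
      ∀ x y : N'.V, N'.Arc x y ↔
        ((∃ a b : N.V, N.Arc a b ∧ b ≠ u ∧ x = g a ∧ y = g b) ∨
         (∃ a b : N.V, N.Reaches u a ∧ N.Reaches u b ∧ N.Arc a b ∧ x = g' a ∧ y = g' b) ∨
         (x = g v₁ ∧ y = g u) ∨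
         (x = g v₂ ∧ y = g' u))

/-- One unfolding step, performed at the (necessarily unique) reticulation node
of `N` labelled `l`, which is required to lie in `R_min(N)`. -/
def UnfoldStep (N N' : IMLN X Λ) (l : Λ) : Prop :=
  ∃ u : N.V, N.IsMinRet u ∧ N.retLabel u = l ∧ IsUnfoldAt N N' u

/-- `IsUnfoldSeq N ls M`: `M` is obtained from `N` by the sequence of unfoldings at
the reticulation nodes labelled by the list `ls` (each minimal at its turn);
this encodes the notion of a compatible sequence and its associated sequence of IMLNs. -/
inductive IsUnfoldSeq : IMLN X Λ → List Λ → IMLN X Λ → Prop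
  | nil (N : IMLN X Λ) : IsUnfoldSeq N [] N
  | cons {N M M' : IMLN X Λ} {l : Λ} {ls : List Λ} :
      UnfoldStep N M l → IsUnfoldSeq M ls M' → IsUnfoldSeq N (l :: ls) M'

/-- A list of reticulation nodes of `N` is a compatible sequence if the associated
sequence of unfoldings exists. -/
def Compatible (N : IMLN X Λ) (us : List N.V) : Prop :=
  (∀ u ∈ us, N.IsRet u) ∧ ∃ M : IMLN X Λ, IsUnfoldSeq N (us.map N.retLabel) M

/-- The order `≤_E` on elementary nodes: `a ≤_E b` iff there are elementary nodes
`a', b'` with the same labels as `a, b` and a directed path from `b` to `a`. -/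
def LE_E (N : IMLN X Λ) (a b : N.V) : Prop :=
  N.IsElem a ∧ N.IsElem b ∧
    ∃ a' b' : N.V, N.IsElem a' ∧ N.IsElem b' ∧
      N.retLabel a' = N.retLabel a ∧ N.retLabel b' = N.retLabel b ∧ N.Reaches b a

/-- `a ∈ E_max(N)`: a maximal elementary node under `≤_E`. -/
def IsEMax (N : IMLN X Λ) (a : N.V) : Prop :=
  N.IsElem a ∧ ∀ b : N.V, N.LE_E a b → b = a

/-- `N'` is the folded IMLN `F(N,u)` of `N` at `u ∈ E_max(N)`: choosing the other
node `v ∈ E_max(N)` with the same label and isomorphic rooted subnetwork, the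
subnetwork rooted at `v` and the arc from the parent `vp` of `v` to `v` are deleted
and the arc `(vp, u)` is added. -/
def IsFoldAt (N N' : IMLN X Λ) (u : N.V) : Prop :=
  N.IsEMax u ∧
  ∃ v : N.V, v ≠ u ∧ N.IsEMax v ∧ N.retLabel v = N.retLabel u ∧
    Isom (N.sub u) (N.sub v) ∧
    ∃ vp : N.V, N.Arc vp v ∧
      ∃ h : N'.V → N.V,
        Function.Injective h ∧
        (∀ x : N'.V, ¬ N.Reaches v (h x)) ∧
        (∀ a : N.V, ¬ N.Reaches v a → ∃ x, h x = a) ∧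
        h N'.root = N.root ∧
        (∀ x : N'.V, N'.leafLabel x = N.leafLabel (h x)) ∧
        (∀ x : N'.V, N'.retLabel x = N.retLabel (h x)) ∧
        (∀ x y : N'.V, N'.Arc x y ↔ (N.Arc (h x) (h y) ∨ (h x = vp ∧ h y = u)))

/-- `IsFoldSeq N ls M`: `M` is obtained from `N` by successively folding at nodes
carrying the labels in the list `ls`. -/
inductive IsFoldSeq : IMLN X Λ → List Λ → IMLN X Λ → Prop
  | nil (N : IMLN X Λ) : IsFoldSeq N [] N
  | cons {N M M' : IMLN X Λ} {l : Λ} {ls : List Λ} :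
      (∃ u : N.V, N.retLabel u = l ∧ IsFoldAt N M u) → IsFoldSeq M ls M' →
      IsFoldSeq N (l :: ls) M'

/-- Pseudo-network condition (i): no reticulation node descends from an elementary node. -/
def PseudoCondI (N : IMLN X Λ) : Prop :=
  ∀ e r : N.V, N.IsElem e → N.IsRet r → ¬ N.Reaches e r

/-- Pseudo-network condition (ii): every node of `E_max(N)` has a mate with the
same label and isomorphic rooted subnetwork. -/
def PseudoCondII (N : IMLN X Λ) : Prop :=
  ∀ u : N.V, N.IsEMax u → ∃ v : N.V, v ≠ u ∧ N.IsEMax v ∧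
    N.retLabel v = N.retLabel u ∧ Isom (N.sub u) (N.sub v)

/-- Fuelled version of the recursive definition of pseudo-networks. -/
def IsPseudoN : ℕ → IMLN X Λ → Prop
  | 0, N => PseudoCondI N ∧ PseudoCondII N
  | n + 1, N => PseudoCondI N ∧ PseudoCondII N ∧
      ∀ (u : N.V) (N' : IMLN X Λ), N.IsEMax u → IsFoldAt N N' u → IsPseudoN n N'

/-- `N` is a pseudo-network: conditions (i) and (ii) hold, and every folding at a
node of `E_max(N)` yields again a pseudo-network. -/
def IsPseudo (N : IMLN X Λ) : Prop := ∀ n : ℕ, IsPseudoN n N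

/-- The polynomial ring `ℤ[x₁,…,xₙ,λ₁,…,λᵣ,y]`, with one variable for each leaf
label, one for each internal label, and one extra variable `y`. -/
abbrev PolyRing (X Λ : Type) := MvPolynomial (X ⊕ (Λ ⊕ Unit)) ℤ

/-- The variable `x_i`. -/
noncomputable def xVar (x : X) : PolyRing X Λ := MvPolynomial.X (Sum.inl x)

/-- The variable `λ_i`. -/
noncomputable def lVar (l : Λ) : PolyRing X Λ := MvPolynomial.X (Sum.inr (Sum.inl l))

/-- The variable `y`. -/
noncomputable def yVar : PolyRing X Λ := MvPolynomial.X (Sum.inr (Sum.inr ()))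

/-- `P` is the polynomial assignment `p` on the nodes of `N`:
`p(u) = φ(u)` on leaves, `p(u) = y + p(v₁)p(v₂)` on internal tree nodes with
children `v₁ ≠ v₂`, and `p(u) = ℓ(u)·p(v)` on nodes with a single child `v`. -/
def IsPolyAssignment (N : IMLN X Λ) (P : N.V → PolyRing X Λ) : Prop :=
  (∀ v : N.V, N.IsLeaf v → P v = xVar (N.leafLabel v)) ∧
  (∀ v v₁ v₂ : N.V, v₁ ≠ v₂ → N.Arc v v₁ → N.Arc v v₂ →
      P v = yVar + P v₁ * P v₂) ∧
  (∀ v w : N.V, N.outDeg v = 1 → N.Arc v w →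
      P v = lVar (N.retLabel v) * P w)

/-- The action `σ·p` of a permutation of the labels (fixing `X` and `Λ` setwise,
and fixing `y`) on polynomials, by renaming variables. -/
noncomputable def permRename (σX : Equiv.Perm X) (σΛ : Equiv.Perm Λ) (p : PolyRing X Λ) : PolyRing X Λ :=
  MvPolynomial.rename (Sum.map (⇑σX) (Sum.map (⇑σΛ) id)) p

/-- A strong path: a directed path all of whose intermediate nodes are elementary
or reticulation nodes.  `StrongReach N u v` says that `u` is a strong ancestor of
`v` (equivalently, `v` is a strong descendant of `u`). -/
inductive StrongReach (N : IMLN X Λ) : N.V → N.V → Prop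
  | refl (u : N.V) : StrongReach N u u
  | single {u v : N.V} : N.Arc u v → StrongReach N u v
  | cons {u w v : N.V} : N.Arc u w → (N.IsElem w ∨ N.IsRet w) →
      StrongReach N w v → StrongReach N u v

/-- `N₁` and `N₂` are equivalent modulo strong paths, with respect to the label
permutation `(σX, σΛ)` and polynomial assignments `P₁`, `P₂`:
(i) `p(N₁) = σ·p(N₂)`; (ii) there is a bijection `f` between the tree nodes
preserving strong descendance; (iii) `p(u) = σ·p(f(u))` for every tree node `u`. -/
def EquivModSP (N₁ N₂ : IMLN X Λ) (P₁ : N₁.V → PolyRing X Λ) (P₂ : N₂.V → PolyRing X Λ)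
    (σX : Equiv.Perm X) (σΛ : Equiv.Perm Λ) : Prop :=
  P₁ N₁.root = permRename σX σΛ (P₂ N₂.root) ∧
  ∃ f : {v : N₁.V // N₁.IsTreeNode v} ≃ {v : N₂.V // N₂.IsTreeNode v},
    (∀ u v : {v : N₁.V // N₁.IsTreeNode v},
        StrongReach N₁ u.1 v.1 → StrongReach N₂ (f u).1 (f v).1) ∧
    (∀ u : {v : N₁.V // N₁.IsTreeNode v}, P₁ u.1 = permRename σX σΛ (P₂ (f u).1))

/-- A tree node `u` is separable if either both of its children are tree nodes, or
some tree node `u₁ ≠ u` is a strong ancestor of one child `c` of `u` and either is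
a strong ancestor of no other strong descendant of `u`, or is also a strong
ancestor of one of the strong descendants of `c`. -/
def IsSeparableNode (N : IMLN X Λ) (u : N.V) : Prop :=
  N.IsTreeNode u → ∀ v₁ v₂ : N.V, v₁ ≠ v₂ → N.Arc u v₁ → N.Arc u v₂ →
    ((N.IsTreeNode v₁ ∧ N.IsTreeNode v₂) ∨
      ∃ u₁ : N.V, u₁ ≠ u ∧ N.IsTreeNode u₁ ∧
        ∃ c : N.V, (c = v₁ ∨ c = v₂) ∧ StrongReach N u₁ c ∧
          ((∀ w : N.V, StrongReach N u w → w ≠ c → ¬ StrongReach N u₁ w) ∨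
           (∃ w : N.V, w ≠ c ∧ StrongReach N c w ∧ StrongReach N u₁ w)))

/-- A network is separable if all its tree nodes are separable. -/
def IsSeparable (N : IMLN X Λ) : Prop := ∀ u : N.V, N.IsSeparableNode u

/-- A (rooted binary) phylogenetic network: an IMLN with no elementary nodes, root
of out-degree two, and bijective leaf labelling (internal labels are ignored). -/
def IsPhyloNet (N : IMLN X Λ) : Prop :=
  N.IsIMLN ∧ (∀ v : N.V, ¬ N.IsElem v) ∧ N.outDeg N.root = 2 ∧
    (∀ x : X, ∃! v : N.V, N.IsLeaf v ∧ N.leafLabel v = x)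

/-- `N'` is obtained from `N` by a single cherry-reduction: either reducing a leaf
`b` of a cherry `{a,b}` (deleting `b` and suppressing the resulting elementary
node, the root moving to `a` if the common parent was the root), or cutting a
reticulated cherry `{a,b}` (deleting the arc `(p_a,p_b)` and suppressing the two
resulting elementary nodes). -/
def IsCherryReduce (N N' : IMLN X Λ) : Prop :=
  (∃ a b pa : N.V, a ≠ b ∧ N.IsLeaf a ∧ N.IsLeaf b ∧ N.Arc pa a ∧ N.Arc pa b ∧
    ∃ h : N'.V → N.V,
      Function.Injective h ∧
      (∀ x : N'.V, h x ≠ b ∧ h x ≠ pa) ∧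
      (∀ c : N.V, c ≠ b → c ≠ pa → ∃ x, h x = c) ∧
      (∀ x : N'.V, N'.leafLabel x = N.leafLabel (h x)) ∧
      ((pa = N.root ∧ h N'.root = a) ∨ (pa ≠ N.root ∧ h N'.root = N.root)) ∧
      (∀ x y : N'.V, N'.Arc x y ↔
        (N.Arc (h x) (h y) ∨ (N.Arc (h x) pa ∧ h y = a)))) ∨
  (∃ a b pa pb : N.V, a ≠ b ∧ N.IsLeaf a ∧ N.IsLeaf b ∧ N.Arc pa a ∧ N.Arc pb b ∧
    N.IsRet pb ∧ N.Arc pa pb ∧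
    ∃ h : N'.V → N.V,
      Function.Injective h ∧
      (∀ x : N'.V, h x ≠ pa ∧ h x ≠ pb) ∧
      (∀ c : N.V, c ≠ pa → c ≠ pb → ∃ x, h x = c) ∧
      (∀ x : N'.V, N'.leafLabel x = N.leafLabel (h x)) ∧
      ((pa = N.root ∧ h N'.root = a) ∨ (pa ≠ N.root ∧ h N'.root = N.root)) ∧
      (∀ x y : N'.V, N'.Arc x y ↔
        (N.Arc (h x) (h y) ∨ (N.Arc (h x) pa ∧ h y = a) ∨ (N.Arc (h x) pb ∧ h y = b))))

/-- A network is orchard if some sequence of cherry-reductions reduces it to a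
single vertex. -/
inductive IsOrchard : IMLN X Λ → Prop
  | single (N : IMLN X Λ) : (∀ v : N.V, v = N.root) → IsOrchard N
  | step {N N' : IMLN X Λ} : IsCherryReduce N N' → IsOrchard N' → IsOrchard N

/-- `ArcPath N u v n`: there is a directed path of length `n` from `u` to `v`. -/
inductive ArcPath (N : IMLN X Λ) : N.V → N.V → ℕ → Prop
  | refl (u : N.V) : ArcPath N u u 0
  | step {u w v : N.V} {n : ℕ} : N.Arc u w → ArcPath N w v n → ArcPath N u v (n + 1)

end IMLN

/-! Forward direction: along a strong path every intermediate node has out-degree one, so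
`p(v)` divides `p` of each of them, and a tree-node ancestor `u` has `p(u) - y = p(v₁) p(v₂)`
with one factor divisible by `p(v)`.

Backward direction: evaluate at `x ↦ 2`, `λ_v ↦ 0`, every other `λ ↦ 2`, `y ↦ 1`. Then `p(v)`
evaluates to `0`, and by induction from the leaves every node that is not a strong ancestor
of `v` evaluates to at least `2`, so that `p(v)` divides neither `p(u)` nor `p(u) - y`. -/

namespace IMLN

variable {X Λ : Type} {N : IMLN X Λ}

lemma not_arc_of_outDeg_eq_zero {u : N.V} (h : N.outDeg u = 0) (w : N.V) : ¬ N.Arc u w := by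
  have := N.fintypeV
  rw [outDeg, Set.ncard_eq_zero] at h
  exact fun hw => (h ▸ hw : w ∈ (∅ : Set N.V))

lemma exists_arc_of_outDeg_eq_one {u : N.V} (h : N.outDeg u = 1) : ∃ c, N.Arc u c := by
  obtain ⟨c, hc⟩ := Set.ncard_eq_one.mp h
  exact ⟨c, (hc ▸ rfl : c ∈ {w | N.Arc u w})⟩

lemma exists_arcs_of_outDeg_eq_two {u : N.V} (h : N.outDeg u = 2) :
    ∃ c₁ c₂, c₁ ≠ c₂ ∧ N.Arc u c₁ ∧ N.Arc u c₂ ∧ ∀ w, N.Arc u w → w = c₁ ∨ w = c₂ := by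
  obtain ⟨c₁, c₂, hne, hc⟩ := Set.ncard_eq_two.mp h
  have hmem : ∀ w, N.Arc u w ↔ w = c₁ ∨ w = c₂ := fun w => Set.ext_iff.mp hc w
  exact ⟨c₁, c₂, hne, (hmem c₁).2 (.inl rfl), (hmem c₂).2 (.inr rfl), fun w => (hmem w).1⟩

namespace IsILPN

lemma outDeg_eq_zero_or_one_or_two (hN : N.IsILPN) (u : N.V) :
    N.outDeg u = 0 ∨ N.outDeg u = 1 ∨ N.outDeg u = 2 := by
  by_cases hr : u = N.root
  · subst hr
    have := hN.1.rootOut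
    omega
  · rcases hN.1.degrees u hr with ⟨_, h⟩ | ⟨_, h⟩ <;> omega

lemma isRet_of_outDeg_eq_one (hN : N.IsILPN) {u : N.V} (h : N.outDeg u = 1) : N.IsRet u := by
  by_cases hr : u = N.root
  · exact absurd ⟨by rw [hr, hN.1.rootIn]; omega, h⟩ (hN.2.1 u)
  · rcases hN.1.degrees u hr with ⟨h1, _⟩ | h2
    · exact absurd ⟨h1.le, h⟩ (hN.2.1 u)
    · exact h2

lemma wellFounded_flip_arc (hN : N.IsILPN) : WellFounded (flip N.Arc) := by
  have := N.fintypeV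
  have : IsTrans N.V (flip (Relation.TransGen N.Arc)) := ⟨fun _ _ _ h₁ h₂ => h₂.trans h₁⟩
  have : Std.Irrefl (flip (Relation.TransGen N.Arc)) := ⟨hN.1.acyclic⟩
  exact Subrelation.wf (r := flip (Relation.TransGen N.Arc)) (fun h => .single h)
    (Finite.wellFounded_of_trans_of_irrefl _)

end IsILPN

lemma StrongReach.eq_or_exists_arc {u v : N.V} (hv : N.outDeg v = 1) (h : N.StrongReach u v) :
    u = v ∨ ∃ w, N.Arc u w ∧ N.outDeg w = 1 ∧ N.StrongReach w v := by
  cases h with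
  | refl => exact .inl rfl
  | single h => exact .inr ⟨v, h, hv, .refl v⟩
  | cons h hw hwv => exact .inr ⟨_, h, hw.elim (·.2) (·.2), hwv⟩

namespace IsPolyAssignment

variable {P : N.V → PolyRing X Λ}

lemma dvd_of_strongReach_of_outDeg_eq_one (hP : IsPolyAssignment N P) {u v : N.V}
    (h : N.StrongReach u v) (hu : N.outDeg u = 1) : P v ∣ P u := by
  induction h with
  | refl => exact dvd_rfl
  | single huv => exact hP.2.2 _ _ hu huv ▸ dvd_mul_left _ _
  | cons huw hw _ ih => exact hP.2.2 _ _ hu huw ▸ (ih (hw.elim (·.2) (·.2))).mul_left _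

lemma dvd_sub_yVar_of_arc (hP : IsPolyAssignment N P) {u w : N.V} (hu : N.outDeg u = 2)
    (hw : N.Arc u w) : P w ∣ P u - yVar := by
  obtain ⟨c₁, c₂, hne, hc₁, hc₂, hchildren⟩ := exists_arcs_of_outDeg_eq_two hu
  rw [hP.2.1 u c₁ c₂ hne hc₁ hc₂, add_sub_cancel_left]
  rcases hchildren w hw with rfl | rfl
  · exact dvd_mul_right _ _
  · exact dvd_mul_left _ _

lemma dvd_of_strongReach (hN : N.IsILPN) (hP : IsPolyAssignment N P) {u v : N.V}
    (hv : N.IsRet v) (h : N.StrongReach u v) :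
    (P v ∣ P u ∧ N.IsRet u) ∨ (P v ∣ P u - yVar ∧ N.IsTreeNode u) := by
  rcases hN.outDeg_eq_zero_or_one_or_two u with h0 | h1 | h2
  · rcases h.eq_or_exists_arc hv.2 with rfl | ⟨w, hw, -⟩
    · exact absurd hv.2 (by omega)
    · exact absurd hw (not_arc_of_outDeg_eq_zero h0 w)
  · exact .inl ⟨hP.dvd_of_strongReach_of_outDeg_eq_one h h1, hN.isRet_of_outDeg_eq_one h1⟩
  · rcases h.eq_or_exists_arc hv.2 with rfl | ⟨w, hw, hw1, hwv⟩
    · exact absurd hv.2 (by omega)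
    · refine .inr ⟨?_, by simp [IsTreeNode, h2]⟩
      exact (hP.dvd_of_strongReach_of_outDeg_eq_one hwv hw1).trans (hP.dvd_sub_yVar_of_arc h2 hw)

end IsPolyAssignment

open scoped Classical in
noncomputable def weight (l : Λ) : PolyRing X Λ →+* ℤ :=
  MvPolynomial.eval (Sum.elim (fun _ => 2) (Sum.elim (fun l' => if l' = l then 0 else 2) fun _ => 1))

@[simp] lemma weight_xVar (l : Λ) (x : X) : weight l (xVar x : PolyRing X Λ) = 2 := by
  simp [weight, xVar]

@[simp] lemma weight_lVar_self (l : Λ) : weight l (lVar l : PolyRing X Λ) = 0 := by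
  simp [weight, lVar]

lemma weight_lVar_of_ne {l l' : Λ} (h : l' ≠ l) : weight l (lVar l' : PolyRing X Λ) = 2 := by
  simp [weight, lVar, h]

@[simp] lemma weight_yVar (l : Λ) : weight l (yVar : PolyRing X Λ) = 1 := by
  simp [weight, yVar]

lemma weight_eq_zero_of_dvd {P : N.V → PolyRing X Λ} (hP : IsPolyAssignment N P) {v : N.V}
    (hv : N.outDeg v = 1) {q : PolyRing X Λ} (h : P v ∣ q) : weight (N.retLabel v) q = 0 := by
  obtain ⟨c, hc⟩ := exists_arc_of_outDeg_eq_one hv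
  have hPv : weight (N.retLabel v) (P v) = 0 := by
    rw [hP.2.2 v c hv hc, map_mul, weight_lVar_self, zero_mul]
  simpa [hPv] using map_dvd (weight (N.retLabel v)) h

lemma two_le_weight_of_not_strongReach (hN : N.IsILPN) {P : N.V → PolyRing X Λ}
    (hP : IsPolyAssignment N P) {v : N.V} (hv : N.IsRet v) (u : N.V)
    (hu : ¬ N.StrongReach u v) : 2 ≤ weight (N.retLabel v) (P u) := by
  induction u using hN.wellFounded_flip_arc.induction with
  | _ u ih =>
  -- A child that is a strong ancestor of `v` is a tree node (else `u` would be one too).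
  have one_le_child : ∀ c, N.Arc u c → 1 ≤ weight (N.retLabel v) (P c) := fun c hc => by
    by_cases hcv : N.StrongReach c v
    · rcases hP.dvd_of_strongReach hN hv hcv with ⟨-, hr⟩ | ⟨hd, -⟩
      · exact absurd (.cons hc (.inr hr) hcv) hu
      · have := weight_eq_zero_of_dvd hP hv.2 hd
        rw [map_sub, weight_yVar] at this
        omega
    · linarith [ih c hc hcv]
  rcases hN.outDeg_eq_zero_or_one_or_two u with h0 | h1 | h2
  · rw [hP.1 u h0, weight_xVar]
  · obtain ⟨c, hc⟩ := exists_arc_of_outDeg_eq_one h1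
    have hlabel : N.retLabel u ≠ N.retLabel v := fun h =>
      hu (hN.1.retInj u v (hN.isRet_of_outDeg_eq_one h1) hv h ▸ .refl u)
    rw [hP.2.2 u c h1 hc, map_mul, weight_lVar_of_ne hlabel]
    linarith [one_le_child c hc]
  · obtain ⟨c₁, c₂, hne, hc₁, hc₂, -⟩ := exists_arcs_of_outDeg_eq_two h2
    rw [hP.2.1 u c₁ c₂ hne hc₁ hc₂, map_add, map_mul, weight_yVar]
    nlinarith [one_le_child c₁ hc₁, one_le_child c₂ hc₂]

end IMLN

/-- **Lemma (ret-desc).** Let `N` be an internally labelled phylogenetic network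
and `v` a reticulation node in it.  A node `u` is a strong ancestor of `v` if and
only if either `p(v) ∣ p(u)`, and then `u` is a reticulation node, or
`p(v) ∣ (p(u) - y)`, and then `u` is a tree node. -/
theorem IMLN.strong_ancestor_iff_dvd (X Λ : Type) (N : IMLN X Λ) (hN : N.IsILPN)
    (P : N.V → IMLN.PolyRing X Λ) (hP : IMLN.IsPolyAssignment N P)
    (v : N.V) (hv : N.IsRet v) (u : N.V) :
    IMLN.StrongReach N u v ↔
      ((P v ∣ P u ∧ N.IsRet u) ∨ (P v ∣ (P u - IMLN.yVar) ∧ N.IsTreeNode u)) := by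
  refine ⟨hP.dvd_of_strongReach hN hv, fun h => ?_⟩
  by_contra hu
  have hweight := two_le_weight_of_not_strongReach hN hP hv u hu
  rcases h with ⟨hd, -⟩ | ⟨hd, -⟩
  · have := weight_eq_zero_of_dvd hP hv.2 hd
    omega
  · have := weight_eq_zero_of_dvd hP hv.2 hd
    rw [map_sub, weight_yVar] at this
    omega
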